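/- (Lemma 2 bound.) For any behavior policy μ, λ ∈ [0,1] with λγ < 1, and any Q-function Q, ‖R*_λ Q − Q*‖ ≤ [(γ + λγ)/(1 − λγ)] ‖Q − Q*‖, where R*_λ Q := Q + ∑_{t≥0} (λγ)^t (P^μ)^t (T Q − Q) and Q* is the unique fixed point of T. -/

import Mathlib

/-!
Write `c = λγ`, `h = Q − Q*` and `S f = ∑ₜ cᵗ (P^μ)ᵗ f`. Since `S f = f + S (c P^μ f)` and `S` is
linear, `R*_λ Q − Q* = h + S (T Q − Q* − h) = S (T Q − Q* − c P^μ h)`. As `P^μ` is a sup-norm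
contraction, `‖S f‖ ≤ ‖f‖ / (1 − c)`, and `‖T Q − Q*‖ = ‖T Q − T Q*‖ ≤ γ ‖h‖`, so
`‖T Q − Q* − c P^μ h‖ ≤ (γ + c) ‖h‖`.
-/

open scoped BigOperators

noncomputable section

/-- The operator `P^μ` on Q-functions. -/
def Pop {X A : Type*} [Fintype X] [Fintype A] (P : X → A → X → ℝ) (μ : X → A → ℝ)
    (Q : X × A → ℝ) : X × A → ℝ :=
  fun p => ∑ y : X, ∑ b : A, P p.1 p.2 y * μ y b * Q (y, b)

/-- The Bellman optimality operator
`(T Q)(x,a) = r(x,a) + γ ∑_{x'} P(x'|x,a) max_{a'} Q(x',a')`. -/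
def Topt {X A : Type*} [Fintype X] [Fintype A] [Nonempty A]
    (P : X → A → X → ℝ) (γ : ℝ) (r : X × A → ℝ) (Q : X × A → ℝ) : X × A → ℝ :=
  fun p => r p + γ * ∑ y : X, P p.1 p.2 y * (⨆ b : A, Q (y, b))

/-- The control operator `R*_λ Q = Q + ∑_{t≥0} (λγ)^t (P^μ)^t (T Q − Q)`. -/
def Rstar {X A : Type*} [Fintype X] [Fintype A] [Nonempty A]
    (P : X → A → X → ℝ) (μ : X → A → ℝ) (γ lam : ℝ) (r : X × A → ℝ)
    (Q : X × A → ℝ) : X × A → ℝ :=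
  Q + ∑' t : ℕ, (lam * γ) ^ t • (Pop P μ)^[t] (Topt P γ r Q - Q)

lemma norm_iterate_le {E : Type*} [Norm E] {L : E → E} (hL : ∀ f, ‖L f‖ ≤ ‖f‖) (t : ℕ) (f : E) :
    ‖L^[t] f‖ ≤ ‖f‖ := by
  induction t with
  | zero => rfl
  | succ t ih =>
    rw [Function.iterate_succ_apply']
    exact (hL _).trans ih

section DiscountedSum

variable {E : Type*} [NormedAddCommGroup E] [NormedSpace ℝ E]

def discountedSum (c : ℝ) (L : E → E) (f : E) : E :=
  ∑' t : ℕ, c ^ t • L^[t] f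

variable {c : ℝ}

lemma norm_pow_smul_iterate_le {L : E → E} (hL : ∀ f, ‖L f‖ ≤ ‖f‖) (hc0 : 0 ≤ c) (t : ℕ)
    (f : E) : ‖c ^ t • L^[t] f‖ ≤ c ^ t * ‖f‖ := by
  rw [norm_smul, Real.norm_of_nonneg (pow_nonneg hc0 t)]
  exact mul_le_mul_of_nonneg_left (norm_iterate_le hL t f) (pow_nonneg hc0 t)

lemma norm_discountedSum_le {L : E → E} (hL : ∀ f, ‖L f‖ ≤ ‖f‖) (hc0 : 0 ≤ c) (hc1 : c < 1)
    (f : E) : ‖discountedSum c L f‖ ≤ (1 - c)⁻¹ * ‖f‖ :=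
  tsum_of_norm_bounded ((hasSum_geometric_of_lt_one hc0 hc1).mul_right _)
    (norm_pow_smul_iterate_le hL hc0 · f)

variable [CompleteSpace E] {L : E →ₗ[ℝ] E}

lemma summable_pow_smul_iterate (hL : ∀ f, ‖L f‖ ≤ ‖f‖) (hc0 : 0 ≤ c) (hc1 : c < 1) (f : E) :
    Summable fun t : ℕ => c ^ t • (⇑L)^[t] f :=
  ((summable_geometric_of_lt_one hc0 hc1).mul_right _).of_norm_bounded
    (norm_pow_smul_iterate_le hL hc0 · f)

lemma discountedSum_sub (hL : ∀ f, ‖L f‖ ≤ ‖f‖) (hc0 : 0 ≤ c) (hc1 : c < 1) (f g : E) :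
    discountedSum c L (f - g) = discountedSum c L f - discountedSum c L g := by
  simp only [discountedSum, iterate_map_sub, smul_sub]
  exact (summable_pow_smul_iterate hL hc0 hc1 f).tsum_sub
    (summable_pow_smul_iterate hL hc0 hc1 g)

lemma discountedSum_eq_add (hL : ∀ f, ‖L f‖ ≤ ‖f‖) (hc0 : 0 ≤ c) (hc1 : c < 1) (f : E) :
    discountedSum c L f = f + discountedSum c L (c • L f) := by
  rw [discountedSum, (summable_pow_smul_iterate hL hc0 hc1 f).tsum_eq_zero_add, discountedSum]
  simp only [pow_zero, one_smul, Function.iterate_zero, id]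
  congr 1
  refine tsum_congr fun t => ?_
  rw [Function.iterate_succ_apply, ← Module.End.coe_pow, map_smul, smul_smul, pow_succ]

lemma add_discountedSum_sub (hL : ∀ f, ‖L f‖ ≤ ‖f‖) (hc0 : 0 ≤ c) (hc1 : c < 1) (f g : E) :
    g + discountedSum c L (f - g) = discountedSum c L (f - c • L g) := by
  rw [discountedSum_sub hL hc0 hc1, discountedSum_sub hL hc0 hc1,
    discountedSum_eq_add hL hc0 hc1 g]
  abel

end DiscountedSum

lemma abs_sum_mul_le_of_abs_le {ι : Type*} {s : Finset ι} {w f : ι → ℝ} {M : ℝ}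
    (hw0 : ∀ i ∈ s, 0 ≤ w i) (hw1 : ∑ i ∈ s, w i = 1) (hf : ∀ i ∈ s, |f i| ≤ M) :
    |∑ i ∈ s, w i * f i| ≤ M :=
  calc |∑ i ∈ s, w i * f i| ≤ ∑ i ∈ s, w i * |f i| := by
        refine (Finset.abs_sum_le_sum_abs _ _).trans_eq (Finset.sum_congr rfl fun i hi => ?_)
        rw [abs_mul, abs_of_nonneg (hw0 i hi)]
    _ ≤ ∑ i ∈ s, w i * M :=
        Finset.sum_le_sum fun i hi => mul_le_mul_of_nonneg_left (hf i hi) (hw0 i hi)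
    _ = M := by rw [← Finset.sum_mul, hw1, one_mul]

lemma abs_ciSup_sub_ciSup_le {ι : Type*} [Finite ι] [Nonempty ι] {f g : ι → ℝ} {M : ℝ}
    (h : ∀ i, |f i - g i| ≤ M) : |(⨆ i, f i) - ⨆ i, g i| ≤ M := by
  rw [abs_sub_le_iff, sub_le_iff_le_add, sub_le_iff_le_add]
  constructor
  · refine ciSup_le fun i => ?_
    have := le_ciSup (Finite.bddAbove_range g) i
    linarith [(abs_le.1 (h i)).2]
  · refine ciSup_le fun i => ?_
    have := le_ciSup (Finite.bddAbove_range f) i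
    linarith [(abs_le.1 (h i)).1]

lemma abs_apply_le_norm {ι : Type*} [Fintype ι] (f : ι → ℝ) (i : ι) : |f i| ≤ ‖f‖ :=
  (Real.norm_eq_abs (f i)).symm ▸ norm_le_pi_norm f i

def Pop.linearMap {X A : Type*} [Fintype X] [Fintype A] (P : X → A → X → ℝ)
    (μ : X → A → ℝ) : (X × A → ℝ) →ₗ[ℝ] (X × A → ℝ) where
  toFun := Pop P μ
  map_add' f g := by
    funext p
    simp only [Pop, Pi.add_apply, mul_add, Finset.sum_add_distrib]
  map_smul' c f := by
    funext p
    simp only [Pop, Pi.smul_apply, smul_eq_mul, RingHom.id_apply, Finset.mul_sum]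
    exact Finset.sum_congr rfl fun y _ => Finset.sum_congr rfl fun b _ => by ring

section MDP

variable {X A : Type*} [Fintype X] [Fintype A] {P : X → A → X → ℝ}

lemma norm_Pop_le (hP0 : ∀ x a y, 0 ≤ P x a y) (hP1 : ∀ x a, ∑ y : X, P x a y = 1)
    {μ : X → A → ℝ} (hμ0 : ∀ x a, 0 ≤ μ x a) (hμ1 : ∀ x, ∑ a : A, μ x a = 1)
    (f : X × A → ℝ) : ‖Pop P μ f‖ ≤ ‖f‖ := by
  refine (pi_norm_le_iff_of_nonneg (norm_nonneg f)).2 fun p => ?_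
  have hweight : ∑ q : X × A, P p.1 p.2 q.1 * μ q.1 q.2 = 1 := by
    simp only [Fintype.sum_prod_type, ← Finset.mul_sum, hμ1, mul_one, hP1]
  have hPop : Pop P μ f p = ∑ q : X × A, P p.1 p.2 q.1 * μ q.1 q.2 * f q := by
    rw [Fintype.sum_prod_type]; rfl
  rw [Real.norm_eq_abs, hPop]
  exact abs_sum_mul_le_of_abs_le (fun q _ => mul_nonneg (hP0 _ _ _) (hμ0 _ _)) hweight
    fun q _ => abs_apply_le_norm f q

lemma norm_Topt_sub_Topt_le [Nonempty A] (hP0 : ∀ x a y, 0 ≤ P x a y)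
    (hP1 : ∀ x a, ∑ y : X, P x a y = 1) {γ : ℝ} (hγ0 : 0 ≤ γ) (r Q Q' : X × A → ℝ) :
    ‖Topt P γ r Q - Topt P γ r Q'‖ ≤ γ * ‖Q - Q'‖ := by
  refine (pi_norm_le_iff_of_nonneg (by positivity)).2 fun p => ?_
  have hdiff : Topt P γ r Q p - Topt P γ r Q' p
      = γ * ∑ y : X, P p.1 p.2 y * ((⨆ b, Q (y, b)) - ⨆ b, Q' (y, b)) := by
    simp only [Topt, mul_sub, Finset.sum_sub_distrib]
    ring
  rw [Pi.sub_apply, Real.norm_eq_abs, hdiff, abs_mul, abs_of_nonneg hγ0]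
  exact mul_le_mul_of_nonneg_left (abs_sum_mul_le_of_abs_le (fun y _ => hP0 _ _ _) (hP1 _ _)
    fun y _ => abs_ciSup_sub_ciSup_le fun b => abs_apply_le_norm (Q - Q') (y, b)) hγ0

end MDP

theorem stmt13_general {X A : Type*} [Fintype X] [Fintype A] [Nonempty A]
    (P : X → A → X → ℝ)
    (hP0 : ∀ x a y, 0 ≤ P x a y) (hP1 : ∀ x a, ∑ y : X, P x a y = 1)
    (μ : X → A → ℝ)
    (hμ0 : ∀ x a, 0 ≤ μ x a) (hμ1 : ∀ x, ∑ a : A, μ x a = 1)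
    (γ : ℝ) (hγ0 : 0 ≤ γ)
    (lam : ℝ) (hl0 : 0 ≤ lam) (hlg : lam * γ < 1)
    (r : X × A → ℝ) (Qstar : X × A → ℝ)
    (hQstar : Topt P γ r Qstar = Qstar)
    (Q : X × A → ℝ) :
    ‖Rstar P μ γ lam r Q - Qstar‖ ≤ (γ + lam * γ) / (1 - lam * γ) * ‖Q - Qstar‖ := by
  set c := lam * γ
  have hc0 : 0 ≤ c := mul_nonneg hl0 hγ0
  set L := Pop.linearMap P μ
  have hL : ∀ f : X × A → ℝ, ‖L f‖ ≤ ‖f‖ := norm_Pop_le hP0 hP1 hμ0 hμ1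
  have hT : ‖Topt P γ r Q - Qstar‖ ≤ γ * ‖Q - Qstar‖ := by
    simpa only [hQstar] using norm_Topt_sub_Topt_le hP0 hP1 hγ0 r Q Qstar
  have hR : Rstar P μ γ lam r Q - Qstar
      = discountedSum c L (Topt P γ r Q - Qstar - c • L (Q - Qstar)) := by
    rw [← add_discountedSum_sub hL hc0 hlg, sub_sub_sub_cancel_right]
    exact add_sub_right_comm _ _ _
  have hsource : ‖Topt P γ r Q - Qstar - c • L (Q - Qstar)‖ ≤ (γ + c) * ‖Q - Qstar‖ :=
    calc _ ≤ ‖Topt P γ r Q - Qstar‖ + ‖c • L (Q - Qstar)‖ := norm_sub_le _ _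
      _ = ‖Topt P γ r Q - Qstar‖ + c * ‖L (Q - Qstar)‖ := by
          rw [norm_smul, Real.norm_of_nonneg hc0]
      _ ≤ γ * ‖Q - Qstar‖ + c * ‖Q - Qstar‖ :=
          add_le_add hT (mul_le_mul_of_nonneg_left (hL _) hc0)
      _ = (γ + c) * ‖Q - Qstar‖ := by ring
  calc ‖Rstar P μ γ lam r Q - Qstar‖ ≤ (1 - c)⁻¹ * ((γ + c) * ‖Q - Qstar‖) := by
        rw [hR]; exact (norm_discountedSum_le hL hc0 hlg _).trans (by gcongr)
    _ = (γ + c) / (1 - c) * ‖Q - Qstar‖ := by ring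

/-- Lemma 2 bound: `‖R*_λ Q − Q*‖ ≤ (γ + λγ)/(1 − λγ) ‖Q − Q*‖`. -/
theorem stmt13 {X A : Type*} [Fintype X] [Fintype A] [Nonempty X] [Nonempty A]
    (P : X → A → X → ℝ)
    (hP0 : ∀ x a y, 0 ≤ P x a y) (hP1 : ∀ x a, ∑ y : X, P x a y = 1)
    (μ : X → A → ℝ)
    (hμ0 : ∀ x a, 0 ≤ μ x a) (hμ1 : ∀ x, ∑ a : A, μ x a = 1)
    (γ : ℝ) (hγ0 : 0 ≤ γ) (hγ1 : γ < 1)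
    (lam : ℝ) (hl0 : 0 ≤ lam) (hl1 : lam ≤ 1) (hlg : lam * γ < 1)
    (r : X × A → ℝ) (Qstar : X × A → ℝ)
    (hQstar : Topt P γ r Qstar = Qstar)
    (Q : X × A → ℝ) :
    ‖Rstar P μ γ lam r Q - Qstar‖ ≤ (γ + lam * γ) / (1 - lam * γ) * ‖Q - Qstar‖ :=
  stmt13_general P hP0 hP1 μ hμ0 hμ1 γ hγ0 lam hl0 hlg r Qstar hQstar Q
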